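/- Snake lemma (Brown exact sequence): Let F : A → B be a pointed functor between pointed groupoids which is a fibration, and let Ker(F) be its strict kernel. For g ∈ Aut(*_B) choose a morphism f : *_A → a of A with F(f) = g (possible since F is a fibration; note F(a) = *_B, so a is an object of Ker(F)). Then the connected component δ(g) of a in π₀(Ker(F)) is independent of the choice of f, and the six-term sequence π₁(Ker(F)) → π₁(A) → π₁(B) → π₀(Ker(F)) → π₀(A) → π₀(B), with maps induced by the inclusion Ker(F) → A, by F, by δ, by the inclusion, and by F, is exact at each of the four middle terms. -/
import Mathlib


open CategoryTheory

universe w v₁ v₂ v₃ v₄ u₁ u₂ u₃ u₄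

namespace Snail

variable {A : Type u₁} [Groupoid.{v₁} A] {B : Type u₂} [Groupoid.{v₂} B]

/-- The set of connected components (isomorphism classes of objects) of a groupoid. -/
def Pi0 (A : Type u₁) [Groupoid.{v₁} A] : Type u₁ :=
  Quotient (CategoryTheory.isIsomorphicSetoid A)

/-- The connected component of an object. -/
def pi0 (a : A) : Pi0 A := Quotient.mk (CategoryTheory.isIsomorphicSetoid A) a

/-- The map induced on connected components by a functor; for pointed functors
between pointed groupoids this is the induced pointed map `π₀(F)`. -/
def pi0Map (F : A ⥤ B) : Pi0 A → Pi0 B :=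
  Quotient.map F.obj fun _ _ h => Nonempty.map (fun i => F.mapIso i) h

/-- The group homomorphism `π₁(F) : Aut (*_A) →* Aut (*_B)` induced by a pointed
functor `F` (with `F.obj pA = pB`). -/
def pi1Map (F : A ⥤ B) {pA : A} {pB : B} (h : F.obj pA = pB) : Aut pA →* Aut pB :=
  (Aut.autMulEquivOfIso (eqToIso h)).toMonoidHom.comp (F.mapAut pA)

/-- The strict kernel `Ker(F)` of a functor `F : A ⥤ B` with respect to the basepoint
`pB` : objects are the objects `a` of `A` with `F a = pB`. -/
structure SKer (F : A ⥤ B) (pB : B) : Type (max u₁ u₂) where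
  pt : A
  base : F.obj pt = pB

/-- Morphisms of the strict kernel are the morphisms `f` of `A` with `F.map f`
equal to the identity of the basepoint (modulo the object identifications). -/
instance skerGroupoid (F : A ⥤ B) (pB : B) : Groupoid (SKer F pB) where
  Hom x y := { f : x.pt ⟶ y.pt // F.map f ≫ eqToHom y.base = eqToHom x.base }
  id x := ⟨𝟙 x.pt, by simp⟩
  comp {x y z} f g := ⟨f.1 ≫ g.1, by rw [F.map_comp, Category.assoc, g.2, f.2]⟩
  id_comp f := Subtype.ext (Category.id_comp f.1)
  comp_id f := Subtype.ext (Category.comp_id f.1)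
  assoc f g h := Subtype.ext (Category.assoc f.1 g.1 h.1)
  inv {x y} f := ⟨Groupoid.inv f.1, by
    obtain ⟨g, h⟩ := f
    dsimp only
    rw [← h, ← Category.assoc, ← F.map_comp, Groupoid.inv_comp, F.map_id, Category.id_comp]⟩
  inv_comp f := Subtype.ext (Groupoid.inv_comp f.1)
  comp_inv f := Subtype.ext (Groupoid.comp_inv f.1)

/-- The inclusion functor `Ker(F) ⥤ A`. -/
def skerIncl (F : A ⥤ B) (pB : B) : SKer F pB ⥤ A where
  obj x := x.pt
  map f := f.1
  map_id _ := rfl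
  map_comp _ _ := rfl

/-- A functor between groupoids is a fibration if every morphism starting at an
object in the image can be lifted. -/
def IsFibration {E : Type u₃} [Groupoid.{v₃} E] {B : Type u₂} [Groupoid.{v₂} B]
    (P : E ⥤ B) : Prop :=
  ∀ (e : E) (b : B) (g : P.obj e ⟶ b),
    ∃ (e' : E) (f : e ⟶ e') (h : P.obj e' = b), P.map f ≫ eqToHom h = g


/-- In a groupoid, any morphism gives an isomorphism. -/
def toIso {C : Type u₃} [Groupoid.{v₃} C] {a b : C} (f : a ⟶ b) : a ≅ b :=
  ⟨f, Groupoid.inv f, Groupoid.comp_inv f, Groupoid.inv_comp f⟩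

lemma pi0_eq_of_hom {C : Type u₃} [Groupoid.{v₃} C] {a b : C} (f : a ⟶ b) :
    pi0 a = pi0 b :=
  Quotient.sound ⟨toIso f⟩

lemma aut_one_hom {C : Type u₃} [Category.{v₃} C] (X : C) :
    (1 : Aut X).hom = 𝟙 X := rfl

lemma pi1Map_hom (F : A ⥤ B) {pA : A} {pB : B} (h : F.obj pA = pB) (a : Aut pA) :
    (pi1Map F h a).hom = eqToHom h.symm ≫ F.map a.hom ≫ eqToHom h := rfl

lemma pi1Map_eq_iff (F : A ⥤ B) {pA : A} {pB : B} (h : F.obj pA = pB) (a : Aut pA)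
    (b : Aut pB) :
    pi1Map F h a = b ↔ F.map a.hom ≫ eqToHom h = eqToHom h ≫ b.hom := by
  constructor
  · intro e
    rw [← e, pi1Map_hom]
    simp
  · intro e
    refine Iso.ext ?_
    rw [pi1Map_hom, e]
    simp

/-- Build a morphism of the strict kernel from a compatible morphism of `A`. -/
def skerHom {F : A ⥤ B} {pB : B} {x y : SKer F pB} (f : x.pt ⟶ y.pt)
    (hf : F.map f ≫ eqToHom y.base = eqToHom x.base) : x ⟶ y := ⟨f, hf⟩

/-- The underlying morphism of a morphism of the strict kernel. -/
def skerVal {F : A ⥤ B} {pB : B} {x y : SKer F pB} (f : x ⟶ y) : x.pt ⟶ y.pt :=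
  Subtype.val f

lemma skerVal_prop {F : A ⥤ B} {pB : B} {x y : SKer F pB} (f : x ⟶ y) :
    F.map (skerVal f) ≫ eqToHom y.base = eqToHom x.base :=
  Subtype.prop f

/-- **Snake lemma (Brown exact sequence).**
For a pointed functor `F : A ⥤ B` between pointed groupoids which is a fibration,
there is a connecting map `δ : π₁(B) → π₀(Ker F)`, sending `g` to the connected
component of the codomain of any lift `f : *_A ⟶ a` of `g` (independence of the
choice of lift is the first clause), making the six-term sequence
`π₁(Ker F) → π₁(A) → π₁(B) → π₀(Ker F) → π₀(A) → π₀(B)` exact at the four middle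
terms. -/
theorem snake_lemma {A : Type u₁} [Groupoid.{v₁} A] {B : Type u₂} [Groupoid.{v₂} B]
    (F : A ⥤ B) (pA : A) (pB : B) (hF : F.obj pA = pB)
    (hfib : IsFibration F) :
    ∃ δ : Aut pB → Pi0 (SKer F pB),
      -- δ g is the class of the codomain of any lift of g
      (∀ (g : Aut pB) (a : A) (f : pA ⟶ a) (h : F.obj a = pB),
        F.map f ≫ eqToHom h = eqToHom hF ≫ g.hom → δ g = pi0 (⟨a, h⟩ : SKer F pB)) ∧
      -- exactness at π₁(A)
      (∀ a : Aut pA,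
        (∃ k : Aut (⟨pA, hF⟩ : SKer F pB), pi1Map (skerIncl F pB) rfl k = a) ↔
          pi1Map F hF a = 1) ∧
      -- exactness at π₁(B)
      (∀ b : Aut pB,
        (∃ a : Aut pA, pi1Map F hF a = b) ↔ δ b = pi0 (⟨pA, hF⟩ : SKer F pB)) ∧
      -- exactness at π₀(Ker F)
      (∀ x : Pi0 (SKer F pB),
        (∃ b : Aut pB, δ b = x) ↔ pi0Map (skerIncl F pB) x = pi0 pA) ∧
      -- exactness at π₀(A)
      (∀ y : Pi0 A,
        (∃ x : Pi0 (SKer F pB), pi0Map (skerIncl F pB) x = y) ↔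
          pi0Map F y = pi0 pB) := by
  classical
  choose a₀ f₀ h₀ hlift using fun g : Aut pB => hfib pA pB (eqToHom hF ≫ g.hom)
  have key : ∀ (g : Aut pB) (a a' : A) (f : pA ⟶ a) (f' : pA ⟶ a')
      (h : F.obj a = pB) (h' : F.obj a' = pB),
      F.map f ≫ eqToHom h = eqToHom hF ≫ g.hom →
      F.map f' ≫ eqToHom h' = eqToHom hF ≫ g.hom →
      pi0 (⟨a, h⟩ : SKer F pB) = pi0 (⟨a', h'⟩ : SKer F pB) := by
    intro g a a' f f' h h' hf hf'
    refine Quotient.sound ⟨toIso (skerHom (x := ⟨a, h⟩) (y := ⟨a', h'⟩)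
      (Groupoid.inv f ≫ f') ?_)⟩
    show F.map (Groupoid.inv f ≫ f') ≫ eqToHom h' = eqToHom h
    rw [F.map_comp, Category.assoc, hf', Groupoid.inv_eq_inv, F.map_inv,
      IsIso.inv_comp_eq, hf]
  refine ⟨fun g => pi0 (⟨a₀ g, h₀ g⟩ : SKer F pB), ?_, ?_, ?_, ?_, ?_⟩
  · intro g a f h hf
    exact key g (a₀ g) a (f₀ g) f (h₀ g) h (hlift g) hf
  · intro a
    constructor
    · rintro ⟨k, hk⟩
      have hk' := (pi1Map_eq_iff (skerIncl F pB) rfl k a).mp hk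
      simp only [eqToHom_refl, Category.comp_id, Category.id_comp] at hk'
      have hv : skerVal k.hom = a.hom := hk'
      refine (pi1Map_eq_iff F hF a 1).mpr ?_
      have := skerVal_prop k.hom
      rw [hv] at this
      simpa [aut_one_hom] using this
    · intro h1
      have h2 : F.map a.hom = 𝟙 _ := by
        have := (pi1Map_eq_iff F hF a 1).mp h1
        simp only [aut_one_hom, Category.comp_id] at this
        have := this.trans (by simp : (eqToHom hF : F.obj pA ⟶ pB) =
          𝟙 _ ≫ eqToHom hF)
        exact (cancel_mono (eqToHom hF)).mp this
      have h3 : F.map a.inv = 𝟙 _ := by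
        have h4 : F.map a.inv ≫ F.map a.hom = 𝟙 _ := by
          rw [← F.map_comp, a.inv_hom_id, F.map_id]
        rwa [h2, Category.comp_id] at h4
      let k : Aut (⟨pA, hF⟩ : SKer F pB) :=
        ⟨skerHom (x := ⟨pA, hF⟩) (y := ⟨pA, hF⟩) a.hom (by rw [h2]; simp),
        skerHom (x := ⟨pA, hF⟩) (y := ⟨pA, hF⟩) a.inv (by rw [h3]; simp),
        Subtype.ext a.hom_inv_id, Subtype.ext a.inv_hom_id⟩
      refine ⟨k, (pi1Map_eq_iff (skerIncl F pB) rfl k a).mpr ?_⟩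
      show a.hom ≫ eqToHom rfl = eqToHom rfl ≫ a.hom
      simp
  · intro b
    constructor
    · rintro ⟨a, ha⟩
      have := (pi1Map_eq_iff F hF a b).mp ha
      exact key b (a₀ b) pA (f₀ b) a.hom (h₀ b) hF (hlift b) this
    · intro hb
      obtain ⟨u⟩ := Quotient.exact hb
      refine ⟨toIso (f₀ b ≫ skerVal u.hom), ?_⟩
      refine (pi1Map_eq_iff F hF _ b).mpr ?_
      show F.map (f₀ b ≫ skerVal u.hom) ≫ eqToHom hF = eqToHom hF ≫ b.hom
      have hu := skerVal_prop u.hom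
      rw [F.map_comp, Category.assoc, hu, hlift b]
  · intro x
    constructor
    · rintro ⟨b, rfl⟩
      exact (pi0_eq_of_hom (f₀ b)).symm
    · intro hx
      obtain ⟨⟨a, h⟩, rfl⟩ := Quotient.exists_rep x
      obtain ⟨e⟩ := Quotient.exact hx
      refine ⟨(eqToIso hF).symm ≪≫ F.mapIso e.symm ≪≫ eqToIso h, ?_⟩
      refine key _ (a₀ _) a (f₀ _) e.inv (h₀ _) h (hlift _) ?_
      show F.map e.inv ≫ eqToHom h =
        eqToHom hF ≫ eqToHom hF.symm ≫ F.map e.inv ≫ eqToHom h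
      simp
  · intro y
    constructor
    · rintro ⟨x, rfl⟩
      obtain ⟨⟨a, h⟩, rfl⟩ := Quotient.exists_rep x
      exact Quotient.sound ⟨eqToIso h⟩
    · intro hy
      obtain ⟨a, rfl⟩ := Quotient.exists_rep y
      obtain ⟨g⟩ := Quotient.exact hy
      obtain ⟨a', f, h, -⟩ := hfib a pB g.hom
      exact ⟨pi0 (⟨a', h⟩ : SKer F pB), (pi0_eq_of_hom f).symm⟩


end Snail
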